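/- (Contamination bound) Let X₁,…,X_n be points, I ∪ O a partition of {1,…,n}, μ̂_n = (1/n)Σᵢ δ_{Xᵢ} and μ̂_n^{(I)} = (1/|I|)Σ_{i∈I} δ_{Xᵢ}. Then for any probability measure μ, (|I|/n)·W^(λ)(μ, μ̂_n^{(I)}) − 2λ|O|/n ≤ W^(λ)(μ, μ̂_n) ≤ (|I|/n)·W^(λ)(μ, μ̂_n^{(I)}) + 2λ|O|/n. -/

import Mathlib

open MeasureTheory
open scoped ENNReal

/-- The robust Wasserstein distance `W^(λ)(μ,ν)`: the infimum over couplings `π`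
of `μ` and `ν` of `∫ min (d x y) (2λ) dπ`. -/
noncomputable def robustW {X : Type*} [MetricSpace X] [MeasurableSpace X]
    (l : ℝ) (μ ν : Measure X) : ℝ :=
  sInf {r : ℝ | ∃ π : Measure (X × X), IsProbabilityMeasure π ∧
    π.map Prod.fst = μ ∧ π.map Prod.snd = ν ∧
    r = ∫ p, min (dist p.1 p.2) (2 * l) ∂π}

open Set
open scoped Finset

/-! If `ν = a • ν₁ + ν₂` with `a + ν₂(X) = 1`, a coupling `π` of `μ` and `ν₁` gives the coupling
`a • π + μ ⊗ ν₂` of `μ` and `ν`. Conversely, the Radon–Nikodym densities of `a • ν₁` and `ν₂`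
against `ν`, pulled back along the second projection, split a coupling of `μ` and `ν` into
`π₁ + π₂` with second marginals `a • ν₁` and `ν₂`, and then `π₁ + (π₂.map fst) ⊗ ν₁` couples `μ`
and `ν₁`. Since the cost is truncated at `2λ`, the pieces paired with `ν₂` cost at most
`2λ ν₂(X)`. The empirical measure of all points is such a mixture, with `ν₁` the empirical
measure of the inliers, `a = |I|/n` and `ν₂(X) = |O|/n`. -/

namespace MeasureTheory.Measure

variable {α β : Type*} [MeasurableSpace α] [MeasurableSpace β]

lemma map_snd_withDensity_comp_snd (π : Measure (α × β)) {g : β → ℝ≥0∞} (hg : Measurable g) :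
    (π.withDensity (fun p ↦ g p.2)).map Prod.snd = (π.map Prod.snd).withDensity g := by
  ext s hs
  rw [map_apply measurable_snd hs, withDensity_apply _ (measurable_snd hs), withDensity_apply _ hs,
    setLIntegral_map hs hg measurable_snd]

lemma exists_eq_add_of_map_snd_eq_add (π : Measure (α × β)) [IsFiniteMeasure π]
    {ν₁ ν₂ : Measure β} (h : π.map Prod.snd = ν₁ + ν₂) :
    ∃ π₁ π₂ : Measure (α × β), π = π₁ + π₂ ∧ π₁.map Prod.snd = ν₁ ∧ π₂.map Prod.snd = ν₂ := by
  have : IsFiniteMeasure (ν₁ + ν₂) := h ▸ inferInstance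
  have : IsFiniteMeasure ν₁ := isFiniteMeasure_of_le (ν₁ + ν₂) (Measure.le_add_right le_rfl)
  have : IsFiniteMeasure ν₂ := isFiniteMeasure_of_le (ν₁ + ν₂) (Measure.le_add_left le_rfl)
  refine ⟨π.withDensity (fun p ↦ ν₁.rnDeriv (ν₁ + ν₂) p.2),
    π.withDensity (fun p ↦ ν₂.rnDeriv (ν₁ + ν₂) p.2), ?_, ?_, ?_⟩
  · have hsum : ∀ᵐ y ∂π.map Prod.snd, ν₁.rnDeriv (ν₁ + ν₂) y + ν₂.rnDeriv (ν₁ + ν₂) y = 1 := by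
      rw [h]
      filter_upwards [rnDeriv_add ν₁ ν₂ (ν₁ + ν₂), rnDeriv_self (ν₁ + ν₂)] with y hadd hself
      rw [← Pi.add_apply, ← hadd, hself]
    rw [← withDensity_add_left (by fun_prop)]
    conv_lhs => rw [← withDensity_one (μ := π)]
    refine withDensity_congr_ae ?_
    filter_upwards [ae_of_ae_map measurable_snd.aemeasurable hsum] with p hp
    exact hp.symm
  · rw [map_snd_withDensity_comp_snd _ (measurable_rnDeriv _ _), h,
      withDensity_rnDeriv_eq _ _ (AbsolutelyContinuous.rfl.add_right ν₂)]
  · rw [map_snd_withDensity_comp_snd _ (measurable_rnDeriv _ _), h,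
      withDensity_rnDeriv_eq _ _ (AbsolutelyContinuous.rfl.add_right' ν₁)]

lemma isProbabilityMeasure_of_map_eq {f : α → β} {π : Measure α} {μ : Measure β}
    [IsProbabilityMeasure μ] (h : π.map f = μ) : IsProbabilityMeasure π := by
  subst h
  exact isProbabilityMeasure_of_map f

end MeasureTheory.Measure

section RobustWasserstein

variable {X : Type*} [MetricSpace X] [MeasurableSpace X] {l : ℝ}

noncomputable def truncCost (l : ℝ) (π : Measure (X × X)) : ℝ :=
  ∫ p, min (dist p.1 p.2) (2 * l) ∂π

lemma truncCost_nonneg (hl : 0 ≤ l) (π : Measure (X × X)) : 0 ≤ truncCost l π :=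
  integral_nonneg fun _ ↦ le_min dist_nonneg (mul_nonneg zero_le_two hl)

lemma truncCost_smul (c : ℝ≥0∞) (π : Measure (X × X)) :
    truncCost l (c • π) = c.toReal * truncCost l π :=
  integral_smul_measure _ c

lemma robustW_le_truncCost (hl : 0 ≤ l) {μ ν : Measure X} [IsProbabilityMeasure μ]
    {π : Measure (X × X)} (h₁ : π.map Prod.fst = μ) (h₂ : π.map Prod.snd = ν) :
    robustW l μ ν ≤ truncCost l π :=
  csInf_le ⟨0, by rintro _ ⟨π, -, -, -, rfl⟩; exact truncCost_nonneg hl π⟩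
    ⟨π, Measure.isProbabilityMeasure_of_map_eq h₁, h₁, h₂, rfl⟩

lemma le_robustW {μ ν : Measure X} [IsProbabilityMeasure μ] [IsProbabilityMeasure ν] {b : ℝ}
    (h : ∀ π : Measure (X × X), π.map Prod.fst = μ → π.map Prod.snd = ν → b ≤ truncCost l π) :
    b ≤ robustW l μ ν :=
  le_csInf ⟨_, μ.prod ν, inferInstance, by simp, by simp, rfl⟩
    (by rintro _ ⟨π, -, h₁, h₂, rfl⟩; exact h π h₁ h₂)

lemma robustW_nonneg (hl : 0 ≤ l) (μ ν : Measure X) [IsProbabilityMeasure μ]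
    [IsProbabilityMeasure ν] : 0 ≤ robustW l μ ν :=
  le_robustW fun π _ _ ↦ truncCost_nonneg hl π

lemma robustW_le_mul_robustW_add {μ ν ν' : Measure X} [IsProbabilityMeasure μ]
    [IsProbabilityMeasure ν'] {a b : ℝ} (ha : 0 ≤ a)
    (h : ∀ π : Measure (X × X), π.map Prod.fst = μ → π.map Prod.snd = ν' →
      robustW l μ ν ≤ a * truncCost l π + b) :
    robustW l μ ν ≤ a * robustW l μ ν' + b := by
  rw [← sub_le_iff_le_add, ← smul_eq_mul, robustW.eq_1 l μ ν', ← Real.sInf_smul_of_nonneg ha]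
  refine le_csInf (Set.Nonempty.smul_set ⟨_, μ.prod ν', inferInstance, by simp, by simp, rfl⟩) ?_
  rintro _ ⟨_, ⟨π, -, h₁, h₂, rfl⟩, rfl⟩
  exact sub_le_iff_le_add.2 (h π h₁ h₂)

variable [BorelSpace X] [SecondCountableTopology X]

lemma integrable_min_dist (l : ℝ) (π : Measure (X × X)) [IsFiniteMeasure π] :
    Integrable (fun p : X × X ↦ min (dist p.1 p.2) (2 * l)) π := by
  refine .of_bound ((continuous_fst.dist continuous_snd).min continuous_const).aestronglyMeasurable
    |2 * l| (ae_of_all _ fun p ↦ abs_le.2 ⟨?_, (min_le_right _ _).trans (le_abs_self _)⟩)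
  exact le_min ((neg_nonpos.2 (abs_nonneg _)).trans dist_nonneg) (neg_abs_le _)

lemma truncCost_add (π₁ π₂ : Measure (X × X)) [IsFiniteMeasure π₁] [IsFiniteMeasure π₂] :
    truncCost l (π₁ + π₂) = truncCost l π₁ + truncCost l π₂ :=
  integral_add_measure (integrable_min_dist l π₁) (integrable_min_dist l π₂)

lemma truncCost_le (π : Measure (X × X)) [IsFiniteMeasure π] :
    truncCost l π ≤ 2 * l * π.real univ :=
  calc truncCost l π ≤ ∫ _, 2 * l ∂π :=
        integral_mono (integrable_min_dist l π) (integrable_const _) fun _ ↦ min_le_right _ _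
    _ = 2 * l * π.real univ := by rw [integral_const, smul_eq_mul, mul_comm]

end RobustWasserstein

section Contamination

variable {X : Type*} [MetricSpace X] [MeasurableSpace X] [BorelSpace X]
  [SecondCountableTopology X] {l : ℝ} {μ ν₁ ν₂ : Measure X} [IsProbabilityMeasure μ]
  [IsProbabilityMeasure ν₁] {a : ℝ≥0∞}

lemma robustW_smul_add_le (hl : 0 ≤ l) (ha : a + ν₂ univ = 1) :
    robustW l μ (a • ν₁ + ν₂) ≤ a.toReal * robustW l μ ν₁ + 2 * l * ν₂.real univ := by
  refine robustW_le_mul_robustW_add ENNReal.toReal_nonneg fun π h₁ h₂ ↦ ?_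
  have := Measure.isProbabilityMeasure_of_map_eq h₁
  have : IsFiniteMeasure ν₂ := ⟨(le_add_self.trans_eq ha).trans_lt ENNReal.one_lt_top⟩
  have := π.smul_finite (ne_top_of_le_ne_top ENNReal.one_ne_top (ha ▸ le_self_add))
  calc robustW l μ (a • ν₁ + ν₂) ≤ truncCost l (a • π + μ.prod ν₂) := by
        refine robustW_le_truncCost hl ?_ ?_
        · rw [Measure.map_add _ _ measurable_fst, Measure.map_smul, h₁, Measure.map_fst_prod,
            ← add_smul, ha, one_smul]
        · rw [Measure.map_add _ _ measurable_snd, Measure.map_smul, h₂, Measure.map_snd_prod,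
            measure_univ, one_smul]
    _ ≤ a.toReal * truncCost l π + 2 * l * ν₂.real univ := by
        rw [truncCost_add, truncCost_smul]
        grw [truncCost_le (μ.prod ν₂)]
        rw [← univ_prod_univ, measureReal_prod_prod, probReal_univ, one_mul]

lemma robustW_le_robustW_smul_add_add (hl : 0 ≤ l) (ha : a + ν₂ univ = 1) :
    robustW l μ ν₁ ≤ robustW l μ (a • ν₁ + ν₂) + 2 * l * ν₂.real univ := by
  have : IsProbabilityMeasure (a • ν₁ + ν₂) := ⟨by simp [ha]⟩
  rw [← sub_le_iff_le_add]
  refine le_robustW fun π h₁ h₂ ↦ ?_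
  have := Measure.isProbabilityMeasure_of_map_eq h₁
  obtain ⟨π₁, π₂, rfl, hπ₁, hπ₂⟩ := π.exists_eq_add_of_map_snd_eq_add h₂
  have := isFiniteMeasure_of_le (π₁ + π₂) (Measure.le_add_right le_rfl)
  have := isFiniteMeasure_of_le (π₁ + π₂) (Measure.le_add_left le_rfl)
  have hmass : π₂.map Prod.fst univ = ν₂ univ := by
    rw [← hπ₂, Measure.map_apply measurable_fst .univ, Measure.map_apply measurable_snd .univ]
    rfl
  rw [sub_le_iff_le_add]
  calc robustW l μ ν₁ ≤ truncCost l (π₁ + (π₂.map Prod.fst).prod ν₁) := by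
        refine robustW_le_truncCost hl ?_ ?_
        · rw [Measure.map_add _ _ measurable_fst, Measure.map_fst_prod, measure_univ, one_smul,
            ← Measure.map_add _ _ measurable_fst, h₁]
        · rw [Measure.map_add _ _ measurable_snd, Measure.map_snd_prod, hπ₁, hmass, ← add_smul,
            ha, one_smul]
    _ ≤ truncCost l π₁ + 2 * l * ν₂.real univ := by
        rw [truncCost_add]
        grw [truncCost_le ((π₂.map Prod.fst).prod ν₁)]
        rw [← univ_prod_univ, measureReal_prod_prod, probReal_univ (μ := ν₁), mul_one,
          measureReal_def, measureReal_def, hmass]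
    _ ≤ truncCost l (π₁ + π₂) + 2 * l * ν₂.real univ := by
        rw [truncCost_add]
        linarith [truncCost_nonneg hl π₂]

end Contamination

section Empirical

variable {ι X : Type*} [MeasurableSpace X]

noncomputable def empiricalMeasure (s : Finset ι) (x : ι → X) : Measure X :=
  (#s : ℝ≥0∞)⁻¹ • ∑ i ∈ s, Measure.dirac (x i)

lemma isProbabilityMeasure_empiricalMeasure {s : Finset ι} (hs : s.Nonempty) (x : ι → X) :
    IsProbabilityMeasure (empiricalMeasure s x) :=
  ⟨by simp [empiricalMeasure, ENNReal.inv_mul_cancel, hs.ne_empty]⟩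

lemma empiricalMeasure_union [DecidableEq ι] {s t : Finset ι} (hst : Disjoint s t)
    (hs : s.Nonempty) (x : ι → X) :
    empiricalMeasure (s ∪ t) x = ((#s : ℝ≥0∞) / #(s ∪ t)) • empiricalMeasure s x +
      (#(s ∪ t) : ℝ≥0∞)⁻¹ • ∑ i ∈ t, Measure.dirac (x i) := by
  rw [empiricalMeasure, empiricalMeasure, smul_smul, div_eq_mul_inv, mul_right_comm,
    ENNReal.mul_inv_cancel (by simpa using hs.ne_empty) (ENNReal.natCast_ne_top _), one_mul,
    Finset.sum_union hst, smul_add]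

end Empirical

theorem robustW_contamination_bound_general {X : Type*} [MetricSpace X] [PolishSpace X]
    [MeasurableSpace X] [BorelSpace X] (l : ℝ) (hl : 0 < l)
    (n : ℕ) (x : Fin n → X)
    (I O : Finset (Fin n)) (hdisj : Disjoint I O) (hunion : I ∪ O = Finset.univ)
    (hI : I.Nonempty)
    (μ : Measure X) [IsProbabilityMeasure μ]
    (μn μI : Measure X)
    (hμn : μn = ((n : ℝ≥0∞))⁻¹ • ∑ i : Fin n, Measure.dirac (x i))
    (hμI : μI = ((I.card : ℝ≥0∞))⁻¹ • ∑ i ∈ I, Measure.dirac (x i)) :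
    ((I.card : ℝ) / n) * robustW l μ μI - 2 * l * O.card / n ≤ robustW l μ μn ∧
    robustW l μ μn ≤ ((I.card : ℝ) / n) * robustW l μ μI + 2 * l * O.card / n := by
  have hcard : #I + #O = n := by
    rw [← Finset.card_union_of_disjoint hdisj, hunion, Finset.card_univ, Fintype.card_fin]
  have hn : (n : ℝ≥0∞) ≠ 0 := Nat.cast_ne_zero.2 (by have := hI.card_pos; omega)
  set ν := (n : ℝ≥0∞)⁻¹ • ∑ i ∈ O, Measure.dirac (x i)
  have hsplit : μn = ((#I : ℝ≥0∞) / n) • μI + ν := by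
    have hμn' : μn = empiricalMeasure (I ∪ O) x := by
      rw [hμn, empiricalMeasure, hunion, Finset.card_univ, Fintype.card_fin]
    rw [hμn', empiricalMeasure_union hdisj hI, Finset.card_union_of_disjoint hdisj, hcard, hμI,
      empiricalMeasure]
  have hν : ν univ = #O / n := by simp [ν, ENNReal.div_eq_inv_mul]
  have hmass : (#I : ℝ≥0∞) / n + ν univ = 1 := by
    rw [hν, ENNReal.div_add_div_same, ← Nat.cast_add, hcard, ENNReal.div_self hn (by simp)]
  have : IsProbabilityMeasure μI := hμI ▸ isProbabilityMeasure_empiricalMeasure hI x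
  have hup := robustW_smul_add_le (μ := μ) (ν₁ := μI) hl.le hmass
  have hlow := robustW_le_robustW_smul_add_add (μ := μ) (ν₁ := μI) hl.le hmass
  simp only [← hsplit, measureReal_def, hν, ENNReal.toReal_div, ENNReal.toReal_natCast] at hup hlow
  have hW := robustW_nonneg hl.le μ μI
  have hfrac : (#I : ℝ) / n ≤ 1 := div_le_one_of_le₀ (by norm_cast; omega) (Nat.cast_nonneg _)
  rw [mul_div_assoc]
  constructor
  · linarith [mul_le_of_le_one_left hW hfrac]
  · linarith

/-- Contamination bound: with `μ̂_n` the full empirical measure and `μ̂_n^{(I)}`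
the empirical measure of the inliers,
`(|I|/n)·W^(λ)(μ, μ̂_n^{(I)}) − 2λ|O|/n ≤ W^(λ)(μ, μ̂_n) ≤
 (|I|/n)·W^(λ)(μ, μ̂_n^{(I)}) + 2λ|O|/n`. -/
theorem robustW_contamination_bound {X : Type*} [MetricSpace X] [PolishSpace X]
    [MeasurableSpace X] [BorelSpace X] (l : ℝ) (hl : 0 < l)
    (n : ℕ) (hn : 0 < n) (x : Fin n → X)
    (I O : Finset (Fin n)) (hdisj : Disjoint I O) (hunion : I ∪ O = Finset.univ)
    (hI : I.Nonempty)
    (μ : Measure X) [IsProbabilityMeasure μ]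
    (μn μI : Measure X)
    (hμn : μn = ((n : ℝ≥0∞))⁻¹ • ∑ i : Fin n, Measure.dirac (x i))
    (hμI : μI = ((I.card : ℝ≥0∞))⁻¹ • ∑ i ∈ I, Measure.dirac (x i)) :
    ((I.card : ℝ) / n) * robustW l μ μI - 2 * l * O.card / n ≤ robustW l μ μn ∧
    robustW l μ μn ≤ ((I.card : ℝ) / n) * robustW l μ μI + 2 * l * O.card / n :=
  robustW_contamination_bound_general l hl n x I O hdisj hunion hI μ μn μI hμn hμI
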